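/- arXiv:1406.7025 — 3 statements merged into one kernel-verified Lean document; each statement's English description precedes it below -/
import Mathlib

section
/- Let V be a type of vertices with a label function L : V → Fin (k+1). Suppose f = {v₁, v₂, v₃} is an rk-face, i ≠ 0 is the label of f (i.e., some vertex of f has label i ≠ 0), and v_n is a new vertex not in f with L(v_n) = i. Then each of the three faces {v_n, v₁, v₂}, {v_n, v₂, v₃}, and {v_n, v₁, v₃} created by the face-split operator is an rk-face. -/
/-- A face (finite set of vertices) is regular k-labeled (an rk-face) w.r.t. a label
function `L : V → Fin (k+1)` if some vertex has nonzero label, and any two vertices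
with nonzero labels have equal labels. -/
def rkFace {V : Type*} {k : ℕ} (L : V → Fin (k + 1)) (f : Finset V) : Prop :=
  (∃ v ∈ f, L v ≠ 0) ∧ ∀ v₁ ∈ f, ∀ v₂ ∈ f, L v₁ ≠ 0 → L v₂ ≠ 0 → L v₁ = L v₂

section

variable {V : Type*} [DecidableEq V] {k : ℕ} {L : V → Fin (k + 1)}

theorem rkFace_insert {v : V} {s : Finset V} (hv : L v ≠ 0)
    (hs : ∀ u ∈ s, L u ≠ 0 → L u = L v) : rkFace L (insert v s) := by
  have hlabel : ∀ u ∈ insert v s, L u ≠ 0 → L u = L v := by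
    simpa only [Finset.forall_mem_insert, implies_true, true_and] using hs
  exact ⟨⟨v, Finset.mem_insert_self v s, hv⟩,
    fun a ha b hb ha0 hb0 => (hlabel a ha ha0).trans (hlabel b hb hb0).symm⟩

theorem rkFace.insert_of_subset {f s : Finset V} {v w : V} (hf : rkFace L f) (hw : w ∈ f)
    (hv : L v ≠ 0) (hwv : L w = L v) (hs : s ⊆ f) : rkFace L (insert v s) :=
  rkFace_insert hv fun u hu hu0 => hwv ▸ hf.2 u (hs hu) w hw hu0 (hwv ▸ hv)

end

theorem faceSplit_rkFaces_general {V : Type*} [DecidableEq V] {k : ℕ}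
    (L : V → Fin (k + 1)) (v₁ v₂ v₃ vn : V) (i : Fin (k + 1)) (hi : i ≠ 0)
    (hf : rkFace L ({v₁, v₂, v₃} : Finset V))
    (hlabel : ∃ v ∈ ({v₁, v₂, v₃} : Finset V), L v = i)
    (hLn : L vn = i) :
    rkFace L ({vn, v₁, v₂} : Finset V) ∧
    rkFace L ({vn, v₂, v₃} : Finset V) ∧
    rkFace L ({vn, v₁, v₃} : Finset V) := by
  obtain ⟨w, hw, hwi⟩ := hlabel
  have hvn : L vn ≠ 0 := hLn ▸ hi
  have hwvn : L w = L vn := hwi.trans hLn.symm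
  refine ⟨hf.insert_of_subset hw hvn hwvn ?_, hf.insert_of_subset hw hvn hwvn ?_,
    hf.insert_of_subset hw hvn hwvn ?_⟩ <;>
  simp [Finset.insert_subset_iff]

/-- Face split: if `f = {v₁, v₂, v₃}` is an rk-face with label `i ≠ 0`, and the new
vertex `v_n ∉ f` is labeled `i`, then each of the three faces created by the
face-split operator is an rk-face. -/
theorem faceSplit_rkFaces {V : Type*} [DecidableEq V] {k : ℕ}
    (L : V → Fin (k + 1)) (v₁ v₂ v₃ vn : V) (i : Fin (k + 1)) (hi : i ≠ 0)
    (hf : rkFace L ({v₁, v₂, v₃} : Finset V))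
    (hlabel : ∃ v ∈ ({v₁, v₂, v₃} : Finset V), L v = i)
    (hnew : vn ∉ ({v₁, v₂, v₃} : Finset V)) (hLn : L vn = i) :
    rkFace L ({vn, v₁, v₂} : Finset V) ∧
    rkFace L ({vn, v₂, v₃} : Finset V) ∧
    rkFace L ({vn, v₁, v₃} : Finset V) :=
  faceSplit_rkFaces_general L v₁ v₂ v₃ vn i hi hf hlabel hLn
end

section
/- Let V be a type of vertices with a label function L : V → Fin (k+1). Let f^w = {v₁, v₂, v_w} and f^e = {v₁, v₂, v_e} be rk-faces sharing the edge e = {v₁, v₂}, and suppose e is an inner-edge, i.e., L(v₁) = i ≠ 0 or L(v₂) = i ≠ 0. Let v_n be a new vertex distinct from v₁, v₂, v_w, v_e with L(v_n) = i. Then each of the four faces {v_n, v₁, v_w}, {v_n, v₂, v_w}, {v_n, v₁, v_e}, {v_n, v₂, v_e} created by the edge-split operator is an rk-face. -/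
/-! Since `e` is an inner-edge, one endpoint has label `i`, so adding the new vertex `v_n`
(also labeled `i`) to either old face keeps it an rk-face. Each new face lies inside one of
these enlarged faces and contains `v_n`, hence is an rk-face. -/

section RkFace

variable {V : Type*} {k : ℕ} {L : V → Fin (k + 1)} {f t : Finset V}

theorem rkFace.subset (hf : rkFace L f) (hsub : t ⊆ f) (ht : ∃ v ∈ t, L v ≠ 0) :
    rkFace L t :=
  ⟨ht, fun v₁ h₁ v₂ h₂ => hf.2 v₁ (hsub h₁) v₂ (hsub h₂)⟩

theorem rkFace.insert_of_label_eq [DecidableEq V] (hf : rkFace L f) {v x : V} (hx : x ∈ f)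
    (hLx : L x = L v) (hv : L v ≠ 0) : rkFace L (insert v f) := by
  have label_eq : ∀ y ∈ insert v f, L y ≠ 0 → L y = L v := by
    intro y hy hy0
    rcases Finset.mem_insert.1 hy with rfl | hy
    · rfl
    · exact (hf.2 y hy x hx hy0 (hLx ▸ hv)).trans hLx
  exact ⟨⟨v, Finset.mem_insert_self v f, hv⟩, fun y₁ h₁ y₂ h₂ h₁0 h₂0 =>
    (label_eq y₁ h₁ h₁0).trans (label_eq y₂ h₂ h₂0).symm⟩

end RkFace

theorem edgeSplit_inner_rkFaces_general {V : Type*} [DecidableEq V] {k : ℕ}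
    (L : V → Fin (k + 1)) (v₁ v₂ vw ve vn : V) (i : Fin (k + 1)) (hi : i ≠ 0)
    (hw : rkFace L ({v₁, v₂, vw} : Finset V))
    (he : rkFace L ({v₁, v₂, ve} : Finset V))
    (hinner : L v₁ = i ∨ L v₂ = i)
    (hLn : L vn = i) :
    rkFace L ({vn, v₁, vw} : Finset V) ∧
    rkFace L ({vn, v₂, vw} : Finset V) ∧
    rkFace L ({vn, v₁, ve} : Finset V) ∧
    rkFace L ({vn, v₂, ve} : Finset V) := by
  obtain ⟨x, hxw, hxe, hLx⟩ :
      ∃ x, x ∈ ({v₁, v₂, vw} : Finset V) ∧ x ∈ ({v₁, v₂, ve} : Finset V) ∧ L x = i :=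
    hinner.elim (fun h => ⟨v₁, by simp, by simp, h⟩) (fun h => ⟨v₂, by simp, by simp, h⟩)
  have hn : L vn ≠ 0 := hLn ▸ hi
  have hw' := hw.insert_of_label_eq hxw (hLx.trans hLn.symm) hn
  have he' := he.insert_of_label_eq hxe (hLx.trans hLn.symm) hn
  have has_vn : ∀ a b : V, ∃ v ∈ ({vn, a, b} : Finset V), L v ≠ 0 :=
    fun _ _ => ⟨vn, by simp, hn⟩
  refine ⟨hw'.subset ?_ (has_vn _ _), hw'.subset ?_ (has_vn _ _),
    he'.subset ?_ (has_vn _ _), he'.subset ?_ (has_vn _ _)⟩ <;>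
  · intro y hy
    simp only [Finset.mem_insert, Finset.mem_singleton] at hy ⊢
    tauto

/-- Edge split of an inner-edge: if the rk-faces `{v₁, v₂, v_w}` and `{v₁, v₂, v_e}`
share the inner-edge `{v₁, v₂}` of label `i ≠ 0`, and the new vertex `v_n` is
labeled `i`, then the four faces created by the edge-split operator are rk-faces. -/
theorem edgeSplit_inner_rkFaces {V : Type*} [DecidableEq V] {k : ℕ}
    (L : V → Fin (k + 1)) (v₁ v₂ vw ve vn : V) (i : Fin (k + 1)) (hi : i ≠ 0)
    (hw : rkFace L ({v₁, v₂, vw} : Finset V))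
    (he : rkFace L ({v₁, v₂, ve} : Finset V))
    (hinner : L v₁ = i ∨ L v₂ = i)
    (hdist : vn ≠ v₁ ∧ vn ≠ v₂ ∧ vn ≠ vw ∧ vn ≠ ve) (hLn : L vn = i) :
    rkFace L ({vn, v₁, vw} : Finset V) ∧
    rkFace L ({vn, v₂, vw} : Finset V) ∧
    rkFace L ({vn, v₁, ve} : Finset V) ∧
    rkFace L ({vn, v₂, ve} : Finset V) :=
  edgeSplit_inner_rkFaces_general L v₁ v₂ vw ve vn i hi hw he hinner hLn
end

section
/- Let V be a type of vertices with a label function L : V → Fin (k+1). Let f^w = {v₁, v₂, v_w} and f^e = {v₁, v₂, v_e} be rk-faces sharing the boundary-edge e = {v₁, v₂}, i.e., L(v₁) = L(v₂) = 0. Let v_n be a new vertex distinct from v₁, v₂, v_w, v_e with L(v_n) = 0. Then each of the four faces {v_n, v₁, v_w}, {v_n, v₂, v_w}, {v_n, v₁, v_e}, {v_n, v₂, v_e} created by the edge-split operator is an rk-face. -/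
theorem rkFace_insert_of_label_eq_zero {V : Type*} [DecidableEq V] {k : ℕ}
    {L : V → Fin (k + 1)} {a : V} (ha : L a = 0) (s : Finset V) :
    rkFace L (insert a s) ↔ rkFace L s := by
  simp [rkFace, ha]

theorem edgeSplit_boundary_rkFaces_general {V : Type*} [DecidableEq V] {k : ℕ}
    (L : V → Fin (k + 1)) (v₁ v₂ vw ve vn : V)
    (h₁ : L v₁ = 0) (h₂ : L v₂ = 0)
    (hw : rkFace L ({v₁, v₂, vw} : Finset V))
    (he : rkFace L ({v₁, v₂, ve} : Finset V))
    (hLn : L vn = 0) :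
    rkFace L ({vn, v₁, vw} : Finset V) ∧
    rkFace L ({vn, v₂, vw} : Finset V) ∧
    rkFace L ({vn, v₁, ve} : Finset V) ∧
    rkFace L ({vn, v₂, ve} : Finset V) := by
  simp only [rkFace_insert_of_label_eq_zero, h₁, h₂, hLn] at hw he ⊢
  exact ⟨hw, hw, he, he⟩

/-- Edge split of a boundary-edge: if the rk-faces `{v₁, v₂, v_w}` and
`{v₁, v₂, v_e}` share the boundary-edge `{v₁, v₂}` (both vertices labeled 0), and
the new vertex `v_n` is labeled 0, then the four faces created by the edge-split
operator are rk-faces. -/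
theorem edgeSplit_boundary_rkFaces {V : Type*} [DecidableEq V] {k : ℕ}
    (L : V → Fin (k + 1)) (v₁ v₂ vw ve vn : V)
    (h₁ : L v₁ = 0) (h₂ : L v₂ = 0)
    (hw : rkFace L ({v₁, v₂, vw} : Finset V))
    (he : rkFace L ({v₁, v₂, ve} : Finset V))
    (hdist : vn ≠ v₁ ∧ vn ≠ v₂ ∧ vn ≠ vw ∧ vn ≠ ve) (hLn : L vn = 0) :
    rkFace L ({vn, v₁, vw} : Finset V) ∧
    rkFace L ({vn, v₂, vw} : Finset V) ∧
    rkFace L ({vn, v₁, ve} : Finset V) ∧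
    rkFace L ({vn, v₂, ve} : Finset V) :=
  edgeSplit_boundary_rkFaces_general L v₁ v₂ vw ve vn h₁ h₂ hw he hLn
end
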